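/- arXiv:1908.10112 — 3 statements merged into one kernel-verified Lean document; each statement's English description precedes it below -/
import Mathlib

section
/- (Explicit expression of the potential function.) Let b > 0, α ∈ ℝ, and let f ∈ C²([0,∞);ℝ) satisfy −f''(t) + (t+α)²f(t) = (1/b)(1 − f(t)²)f(t) for all t ≥ 0. Assume that t·f(t) → 0 and f'(t) → 0 as t → ∞, that t ↦ (t+α)f(t)² is integrable on (0,∞), and the optimality condition ∫₀^∞ (t+α)f(t)² dt = 0. Then for every t ≥ 0: F(t) = −f'(t)² + (t+α)²f(t)² − (1/b)f(t)² + (1/(2b))f(t)⁴, where F(t) := 2∫₀^t (η+α)f(η)² dη. -/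
open MeasureTheory Real Set Filter
open scoped Topology

noncomputable section

/-!
Multiplying the equation by `2 f'` shows that the derivative of
`E(t) = −f'(t)² + (t+α)² f(t)² − f(t)²/b + f(t)⁴/(2b)` is `2 (t+α) f(t)²`, so `F − E` is constant
on `[0, ∞)`. The decay assumptions give `E(t) → 0`, and the optimality condition gives `F(t) → 0`,
hence the constant is `0`.
-/

def glEnergy (b α : ℝ) (f : ℝ → ℝ) (t : ℝ) : ℝ :=
  -(deriv f t) ^ 2 + (t + α) ^ 2 * (f t) ^ 2 - 1 / b * (f t) ^ 2 + 1 / (2 * b) * (f t) ^ 4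

theorem hasDerivAt_glEnergy (b α : ℝ) {f : ℝ → ℝ} (hf : ContDiff ℝ 2 f) (t : ℝ) :
    HasDerivAt (glEnergy b α f)
      (2 * (t + α) * f t ^ 2 + 2 * deriv f t *
        (-deriv (deriv f) t + (t + α) ^ 2 * f t - 1 / b * (1 - f t ^ 2) * f t)) t := by
  have hf' : ContDiff ℝ 1 (deriv f) := hf.iterate_deriv' 1 1
  have hfd : HasDerivAt f (deriv f t) t := (hf.differentiable (by norm_num) t).hasDerivAt
  have hf'd : HasDerivAt (deriv f) (deriv (deriv f) t) t :=
    (hf'.differentiable one_ne_zero t).hasDerivAt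
  have hshift : HasDerivAt (fun u : ℝ => u + α) 1 t := (hasDerivAt_id t).add_const α
  refine ((((hf'd.pow 2).neg.add ((hshift.pow 2).mul (hfd.pow 2))).sub
    ((hfd.pow 2).const_mul (1 / b))).add ((hfd.pow 4).const_mul (1 / (2 * b)))).congr_deriv ?_
  simp only [Pi.pow_apply]
  ring

theorem tendsto_zero_of_tendsto_id_mul {f : ℝ → ℝ}
    (h : Tendsto (fun t => t * f t) atTop (𝓝 0)) : Tendsto f atTop (𝓝 0) := by
  have hdiv := h.mul tendsto_inv_atTop_zero
  rw [mul_zero] at hdiv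
  refine hdiv.congr' ?_
  filter_upwards [eventually_gt_atTop 0] with t ht
  field_simp

theorem tendsto_glEnergy_atTop (b α : ℝ) {f : ℝ → ℝ}
    (hf : Tendsto (fun t => t * f t) atTop (𝓝 0)) (hf' : Tendsto (deriv f) atTop (𝓝 0)) :
    Tendsto (glEnergy b α f) atTop (𝓝 0) := by
  have hf0 := tendsto_zero_of_tendsto_id_mul hf
  have hshift : Tendsto (fun t => (t + α) * f t) atTop (𝓝 0) := by
    simpa [add_mul] using hf.add (hf0.const_mul α)
  have h := (((hf'.pow 2).neg.add (hshift.pow 2)).sub ((hf0.pow 2).const_mul (1 / b))).add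
    ((hf0.pow 4).const_mul (1 / (2 * b)))
  norm_num at h
  refine h.congr fun t => ?_
  simp only [glEnergy]
  ring

theorem eq_of_hasDerivAt_zero_of_tendsto {Φ : ℝ → ℝ} {a L : ℝ}
    (hderiv : ∀ s, a ≤ s → HasDerivAt Φ 0 s) (hlim : Tendsto Φ atTop (𝓝 L)) :
    ∀ t, a ≤ t → Φ t = L := by
  have hconst : ∀ t, a ≤ t → Φ t = Φ a := fun t ht =>
    constant_of_has_deriv_right_zero
      (fun s hs => (hderiv s hs.1).continuousAt.continuousWithinAt)
      (fun s hs => (hderiv s hs.1).hasDerivWithinAt) t ⟨ht, le_rfl⟩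
  have hΦa : Φ a = L := by
    refine tendsto_nhds_unique (tendsto_const_nhds.congr' ?_) hlim
    filter_upwards [eventually_ge_atTop a] with t ht
    exact (hconst t ht).symm
  exact fun t ht => (hconst t ht).trans hΦa

theorem potential_function_explicit_general
    (b α : ℝ)
    (f : ℝ → ℝ) (hf : ContDiff ℝ 2 f)
    (hode : ∀ t : ℝ, 0 ≤ t →
      -deriv (deriv f) t + (t + α) ^ 2 * f t = 1 / b * (1 - (f t) ^ 2) * f t)
    (hlim1 : Tendsto (fun t => t * f t) atTop (𝓝 0))
    (hlim2 : Tendsto (deriv f) atTop (𝓝 0))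
    (hint : IntegrableOn (fun t => (t + α) * (f t) ^ 2) (Ioi 0))
    (hopt : (∫ t in Ioi (0 : ℝ), (t + α) * (f t) ^ 2) = 0) :
    ∀ t : ℝ, 0 ≤ t →
      2 * (∫ η in Ioo (0 : ℝ) t, (η + α) * (f η) ^ 2) =
        -(deriv f t) ^ 2 + (t + α) ^ 2 * (f t) ^ 2 - 1 / b * (f t) ^ 2 +
          1 / (2 * b) * (f t) ^ 4 := by
  set g : ℝ → ℝ := fun η => (η + α) * (f η) ^ 2
  have hg : Continuous g := by fun_prop (disch := exact hf.continuous)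
  have hderiv (s : ℝ) (hs : 0 ≤ s) :
      HasDerivAt (fun u => 2 * (∫ η in (0 : ℝ)..u, g η) - glEnergy b α f u) 0 s := by
    refine (((hg.integral_hasStrictDerivAt 0 s).hasDerivAt.const_mul 2).sub
      (hasDerivAt_glEnergy b α hf s)).congr_deriv ?_
    rw [sub_eq_zero.mpr (hode s hs)]
    ring
  have hlim : Tendsto (fun u => 2 * (∫ η in (0 : ℝ)..u, g η) - glEnergy b α f u) atTop (𝓝 0) := by
    have hF := intervalIntegral_tendsto_integral_Ioi 0 hint tendsto_id
    rw [hopt] at hF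
    simpa using (hF.const_mul 2).sub (tendsto_glEnergy_atTop b α hlim1 hlim2)
  intro t ht
  rw [← integral_Ioc_eq_integral_Ioo, ← intervalIntegral.integral_of_le ht]
  exact sub_eq_zero.mp (eq_of_hasDerivAt_zero_of_tendsto hderiv hlim t ht)

/-- **Explicit expression of the potential function.**  For a `C²` solution of the 1D
GL equation on the half-line with the stated decay and the optimality condition,
`F(t) = −f′(t)² + (t+α)² f(t)² − (1/b) f(t)² + (1/(2b)) f(t)⁴`. -/
theorem potential_function_explicit
    (b α : ℝ) (hb : 0 < b)
    (f : ℝ → ℝ) (hf : ContDiff ℝ 2 f)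
    (hode : ∀ t : ℝ, 0 ≤ t →
      -deriv (deriv f) t + (t + α) ^ 2 * f t = 1 / b * (1 - (f t) ^ 2) * f t)
    (hlim1 : Tendsto (fun t => t * f t) atTop (𝓝 0))
    (hlim2 : Tendsto (deriv f) atTop (𝓝 0))
    (hint : IntegrableOn (fun t => (t + α) * (f t) ^ 2) (Ioi 0))
    (hopt : (∫ t in Ioi (0 : ℝ), (t + α) * (f t) ^ 2) = 0) :
    ∀ t : ℝ, 0 ≤ t →
      2 * (∫ η in Ioo (0 : ℝ) t, (η + α) * (f η) ^ 2) =
        -(deriv f t) ^ 2 + (t + α) ^ 2 * (f t) ^ 2 - 1 / b * (f t) ^ 2 +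
          1 / (2 * b) * (f t) ^ 4 :=
  potential_function_explicit_general b α f hf hode hlim1 hlim2 hint hopt
end
end

section
/- (Integral bound on the derivative of the 1D profile.) Let b > 0, α ∈ ℝ, ℓ > 0, and let f ∈ C²([0,ℓ];ℝ) satisfy 0 ≤ f ≤ 1 on [0,ℓ], the end condition f'(ℓ) = 0, and the ODE −f''(t) + (t+α)²f(t) = (1/b)(1 − f(t)²)f(t) on [0,ℓ]. Then for every t ∈ [0,ℓ]: |f'(t)| ≤ ∫_t^ℓ ((η+α)² + 1/b)·f(η) dη. Consequently, if moreover f(η) ≤ M·e^{−(η+α)²/2} on [0,ℓ] for some M > 0, then there exists a constant C (depending only on b, α, M and not on ℓ) such that |f'(t)| ≤ C·e^{−t²/4} for all t ∈ [0,ℓ]. -/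
/-!
Integrating the ODE from `t` to `ℓ` and using `f'(ℓ) = 0` gives
`f'(t) = -∫_t^ℓ f''`, and the equation together with `0 ≤ f ≤ 1` bounds
`|f''(η)| = |(η+α)² f - (1 - f²) f / b|` by `((η+α)² + 1/b) f(η)`.
For the Gaussian decay, write `(η+α)²/2 = η²/4 + (η/2+α)² - α²/2`: the factor
`e^{-(η/2+α)²}` absorbs the polynomial weight, and for `0 ≤ t ≤ η` one has
`e^{-η²/4} ≤ e^{-t²/4} e^{-(η-t)²/4}`, whose integral in `η` over `ℝ` is `e^{-t²/4} √(4π)`.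
-/

open MeasureTheory Real Set

lemma abs_le_intervalIntegral_of_abs_deriv_le {g w : ℝ → ℝ} {t ℓ : ℝ} (htℓ : t ≤ ℓ)
    (hg : ContDiff ℝ 1 g) (hgℓ : g ℓ = 0) (hw : IntervalIntegrable w volume t ℓ)
    (hbound : ∀ η ∈ Icc t ℓ, |deriv g η| ≤ w η) :
    |g t| ≤ ∫ η in t..ℓ, w η := by
  have hdg : Continuous (deriv g) := hg.continuous_deriv_one
  have hFTC : ∫ η in t..ℓ, deriv g η = g ℓ - g t :=
    intervalIntegral.integral_deriv_eq_sub (fun x _ => hg.differentiable one_ne_zero x)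
      (hdg.intervalIntegrable t ℓ)
  calc |g t| = |∫ η in t..ℓ, deriv g η| := by rw [hFTC, hgℓ, zero_sub, abs_neg]
    _ ≤ ∫ η in t..ℓ, |deriv g η| := intervalIntegral.abs_integral_le_integral_abs htℓ
    _ ≤ ∫ η in t..ℓ, w η :=
      intervalIntegral.integral_mono_on htℓ (hdg.abs.intervalIntegrable t ℓ) hw hbound

lemma abs_sub_mul_one_sub_sq_mul_le {q c x : ℝ} (hq : 0 ≤ q) (hc : 0 ≤ c) (hx₀ : 0 ≤ x)
    (hx₁ : x ≤ 1) : |q * x - c * (1 - x ^ 2) * x| ≤ (q + c) * x := by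
  have hqx : 0 ≤ q * x := mul_nonneg hq hx₀
  have hcx : 0 ≤ c * x := mul_nonneg hc hx₀
  rw [abs_le]
  constructor
  · nlinarith [mul_nonneg hcx (sq_nonneg x)]
  · nlinarith [mul_nonneg hcx (sq_nonneg x),
      mul_le_mul_of_nonneg_left (sq_le_one_iff₀ hx₀ |>.mpr hx₁) hcx]

section GinzburgLandau

variable {b α : ℝ} {f : ℝ → ℝ}

lemma Continuous.sq_add_mul (c : ℝ) (hf : Continuous f) :
    Continuous fun η => ((η + α) ^ 2 + c) * f η := by
  fun_prop

lemma abs_deriv_deriv_le_of_gl (hb : 0 < b) {η : ℝ} (hf₀ : 0 ≤ f η) (hf₁ : f η ≤ 1)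
    (hode : -deriv (deriv f) η + (η + α) ^ 2 * f η = 1 / b * (1 - (f η) ^ 2) * f η) :
    |deriv (deriv f) η| ≤ ((η + α) ^ 2 + 1 / b) * f η := by
  have hf'' : deriv (deriv f) η = (η + α) ^ 2 * f η - 1 / b * (1 - (f η) ^ 2) * f η := by
    linarith
  rw [hf'']
  exact abs_sub_mul_one_sub_sq_mul_le (sq_nonneg _) (by positivity) hf₀ hf₁

lemma abs_deriv_le_setIntegral_of_gl (hb : 0 < b) {ℓ : ℝ} (hf : ContDiff ℝ 2 f)
    (hf01 : ∀ t ∈ Icc (0 : ℝ) ℓ, 0 ≤ f t ∧ f t ≤ 1) (hfℓ : deriv f ℓ = 0)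
    (hode : ∀ t ∈ Icc (0 : ℝ) ℓ,
      -deriv (deriv f) t + (t + α) ^ 2 * f t = 1 / b * (1 - (f t) ^ 2) * f t)
    {t : ℝ} (ht : t ∈ Icc (0 : ℝ) ℓ) :
    |deriv f t| ≤ ∫ η in Ioo t ℓ, ((η + α) ^ 2 + 1 / b) * f η := by
  have hf' : ContDiff ℝ 1 (deriv f) := (contDiff_succ_iff_deriv (n := 1)).mp hf |>.2.2
  rw [← integral_Ioc_eq_integral_Ioo, ← intervalIntegral.integral_of_le ht.2]
  refine abs_le_intervalIntegral_of_abs_deriv_le ht.2 hf' hfℓ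
    ((hf.continuous.sq_add_mul (1 / b)).intervalIntegrable t ℓ) ?_
  intro η hη
  have hη' : η ∈ Icc (0 : ℝ) ℓ := ⟨ht.1.trans hη.1, hη.2⟩
  exact abs_deriv_deriv_le_of_gl hb (hf01 η hη').1 (hf01 η hη').2 (hode η hη')

end GinzburgLandau

lemma sq_mul_exp_neg_sq_le_one (u : ℝ) : u ^ 2 * exp (-u ^ 2) ≤ 1 :=
  (mul_exp_neg_le_exp_neg_one _).trans (exp_le_one_iff.mpr (by norm_num))

lemma sq_add_mul_exp_neg_sq_add_div_two_le {c : ℝ} (hc : 0 ≤ c) (α η : ℝ) :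
    ((η + α) ^ 2 + c) * exp (-(η + α) ^ 2 / 2) ≤
      exp (α ^ 2 / 2) * (8 + 2 * α ^ 2 + c) * exp (-η ^ 2 / 4) := by
  set u := η / 2 + α
  have hsplit : exp (-(η + α) ^ 2 / 2) = exp (-u ^ 2) * exp (α ^ 2 / 2) * exp (-η ^ 2 / 4) := by
    rw [← exp_add, ← exp_add]; congr 1; simp only [u]; ring
  have hweight : ((η + α) ^ 2 + c) * exp (-u ^ 2) ≤ 8 + 2 * α ^ 2 + c := by
    have hη : η + α = 2 * u - α := by ring
    have he₀ : 0 ≤ exp (-u ^ 2) := (exp_pos _).le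
    have he₁ : exp (-u ^ 2) ≤ 1 := exp_le_one_iff.mpr (neg_nonpos.mpr (sq_nonneg u))
    rw [hη]
    nlinarith [sq_mul_exp_neg_sq_le_one u, mul_nonneg (sq_nonneg (2 * u + α)) he₀,
      mul_le_mul_of_nonneg_left he₁ (sq_nonneg α), mul_le_mul_of_nonneg_left he₁ hc]
  calc ((η + α) ^ 2 + c) * exp (-(η + α) ^ 2 / 2)
      = exp (α ^ 2 / 2) * (((η + α) ^ 2 + c) * exp (-u ^ 2)) * exp (-η ^ 2 / 4) := by
        rw [hsplit]; ring
    _ ≤ _ := by gcongr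

lemma exp_neg_sq_div_four_le {t η : ℝ} (ht : 0 ≤ t) (htη : t ≤ η) :
    exp (-η ^ 2 / 4) ≤ exp (-t ^ 2 / 4) * exp (-(1 / 4) * (η - t) ^ 2) := by
  rw [← exp_add, exp_le_exp]
  nlinarith [mul_nonneg ht (sub_nonneg.mpr htη)]

lemma integrable_exp_neg_mul_sub_sq {a : ℝ} (ha : 0 < a) (t : ℝ) :
    Integrable fun x => exp (-a * (x - t) ^ 2) :=
  (integrable_exp_neg_mul_sq ha).comp_sub_right t

lemma integral_exp_neg_mul_sub_sq (a t : ℝ) : ∫ x, exp (-a * (x - t) ^ 2) = √(π / a) :=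
  (integral_sub_right_eq_self (fun x => exp (-a * x ^ 2)) t).trans (integral_gaussian a)

lemma setIntegral_weight_mul_le_of_le_gaussian {c α M ℓ t : ℝ} {f : ℝ → ℝ} (hc : 0 ≤ c)
    (hM : 0 ≤ M) (ht : 0 ≤ t) (hf : IntegrableOn (fun η => ((η + α) ^ 2 + c) * f η) (Ioo t ℓ))
    (hfM : ∀ η ∈ Ioo t ℓ, f η ≤ M * exp (-(η + α) ^ 2 / 2)) :
    ∫ η in Ioo t ℓ, ((η + α) ^ 2 + c) * f η ≤
      M * exp (α ^ 2 / 2) * (8 + 2 * α ^ 2 + c) * √(π / (1 / 4)) * exp (-t ^ 2 / 4) := by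
  set K := M * exp (α ^ 2 / 2) * (8 + 2 * α ^ 2 + c)
  set g := fun η => K * exp (-t ^ 2 / 4) * exp (-(1 / 4) * (η - t) ^ 2)
  have hg : Integrable g := (integrable_exp_neg_mul_sub_sq (by norm_num) t).const_mul _
  have hfg : ∀ η ∈ Ioo t ℓ, ((η + α) ^ 2 + c) * f η ≤ g η := by
    intro η hη
    calc ((η + α) ^ 2 + c) * f η
        ≤ M * (((η + α) ^ 2 + c) * exp (-(η + α) ^ 2 / 2)) := by
          rw [mul_left_comm]; gcongr; exact hfM η hη
      _ ≤ M * (exp (α ^ 2 / 2) * (8 + 2 * α ^ 2 + c) * exp (-η ^ 2 / 4)) :=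
          mul_le_mul_of_nonneg_left (sq_add_mul_exp_neg_sq_add_div_two_le hc α η) hM
      _ ≤ g η := by
          have := exp_neg_sq_div_four_le ht hη.1.le
          simp only [g, K, mul_assoc]; gcongr
  calc ∫ η in Ioo t ℓ, ((η + α) ^ 2 + c) * f η
      ≤ ∫ η in Ioo t ℓ, g η := setIntegral_mono_on hf hg.integrableOn measurableSet_Ioo hfg
    _ ≤ ∫ η, g η := setIntegral_le_integral hg (ae_of_all _ fun η => by positivity)
    _ = K * √(π / (1 / 4)) * exp (-t ^ 2 / 4) := by
        simp only [g]; rw [integral_const_mul, integral_exp_neg_mul_sub_sq]; ring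

/-- **Integral bound on the derivative of the 1D profile.**  For a `C²` solution of
the 1D GL equation on `[0,ℓ]` with `0 ≤ f ≤ 1` and `f′(ℓ) = 0`,
`|f′(t)| ≤ ∫_t^ℓ ((η+α)² + 1/b) f(η) dη`; moreover, under a Gaussian bound on `f`,
`|f′(t)| ≤ C e^{−t²/4}` with `C` depending only on `b`, `α`, `M` (not on `ℓ`). -/
theorem oneD_profile_derivative_bound
    (b α M : ℝ) (hb : 0 < b) (hM : 0 < M) :
    (∀ ℓ : ℝ, 0 < ℓ → ∀ f : ℝ → ℝ, ContDiff ℝ 2 f →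
      (∀ t ∈ Icc (0 : ℝ) ℓ, 0 ≤ f t ∧ f t ≤ 1) →
      deriv f ℓ = 0 →
      (∀ t ∈ Icc (0 : ℝ) ℓ,
        -deriv (deriv f) t + (t + α) ^ 2 * f t = 1 / b * (1 - (f t) ^ 2) * f t) →
      ∀ t ∈ Icc (0 : ℝ) ℓ,
        |deriv f t| ≤ ∫ η in Ioo t ℓ, ((η + α) ^ 2 + 1 / b) * f η) ∧
    ∃ C > (0 : ℝ), ∀ ℓ : ℝ, 0 < ℓ → ∀ f : ℝ → ℝ, ContDiff ℝ 2 f →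
      (∀ t ∈ Icc (0 : ℝ) ℓ, 0 ≤ f t ∧ f t ≤ 1) →
      deriv f ℓ = 0 →
      (∀ t ∈ Icc (0 : ℝ) ℓ,
        -deriv (deriv f) t + (t + α) ^ 2 * f t = 1 / b * (1 - (f t) ^ 2) * f t) →
      (∀ η ∈ Icc (0 : ℝ) ℓ, f η ≤ M * Real.exp (-(η + α) ^ 2 / 2)) →
      ∀ t ∈ Icc (0 : ℝ) ℓ, |deriv f t| ≤ C * Real.exp (-t ^ 2 / 4) := by
  refine ⟨fun ℓ _ f hf hf01 hfℓ hode t ht =>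
    abs_deriv_le_setIntegral_of_gl hb hf hf01 hfℓ hode ht, ?_⟩
  refine ⟨M * exp (α ^ 2 / 2) * (8 + 2 * α ^ 2 + 1 / b) * √(π / (1 / 4)), by positivity, ?_⟩
  intro ℓ _ f hf hf01 hfℓ hode hfM t ht
  refine (abs_deriv_le_setIntegral_of_gl hb hf hf01 hfℓ hode ht).trans ?_
  refine setIntegral_weight_mul_le_of_le_gaussian (by positivity) hM.le ht.1
    ((hf.continuous.sq_add_mul _).integrableOn_Icc.mono_set Ioo_subset_Icc_self)
    fun η hη => hfM η ?_
  exact ⟨ht.1.trans hη.1.le, hη.2.le⟩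
end

section
/- (Gaussian decay of the 1D profile.) Let b ≥ 1, α ∈ ℝ, and let f ∈ C²([0,∞);ℝ) satisfy 0 ≤ f ≤ 1 on [0,∞), f(t) → 0 as t → ∞, and the ODE −f''(t) + (t+α)²f(t) = (1/b)(1 − f(t)²)f(t) for all t ≥ 0. Then there exists a constant C > 0 such that f(t) ≤ C·e^{−(t+α)²/2} for every t ≥ 0. -/
open Real Set Filter
open scoped Topology

/-!
Since `0 ≤ f ≤ 1` and `b ≥ 1`, the equation gives `f'' ≥ ((t + α)² - 1) f`, while the Gaussian
`G(t) = e^{-(t+α)²/2}` satisfies `G'' = ((t + α)² - 1) G` exactly. Beyond `T = |α| + 1` the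
coefficient `(t + α)² - 1` is positive, so `w = f - C G` cannot have a positive maximum on
`(T, ∞)`. Choosing `C` with `C G ≥ 1 ≥ f` on `[0, T]` and using `w → 0` at infinity gives `w ≤ 0`.
-/

theorem IsLocalMax.deriv_deriv_nonpos {f : ℝ → ℝ} {x₀ : ℝ} (h : IsLocalMax f x₀)
    (hc : ContinuousAt f x₀) : deriv (deriv f) x₀ ≤ 0 := by
  by_contra! hpos
  -- by the second derivative test `x₀` would also be a local minimum, making `f` locally constant
  have hmin : IsLocalMin f x₀ := isLocalMin_of_deriv_deriv_pos hpos h.deriv_eq_zero hc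
  have hconst : f =ᶠ[𝓝 x₀] fun _ => f x₀ :=
    (h.and hmin).mono fun _ hx => le_antisymm hx.1 hx.2
  have hzero : deriv (deriv f) x₀ = 0 := by
    simpa using hconst.deriv.deriv_eq
  exact hpos.ne' hzero

theorem nonpos_of_tendsto_zero_of_deriv_deriv_pos {w : ℝ → ℝ} {T t : ℝ} (hw : Continuous w)
    (hT : w T ≤ 0) (hlim : Tendsto w atTop (𝓝 0))
    (hconvex : ∀ s, T < s → 0 < w s → 0 < deriv (deriv w) s) (ht : T ≤ t) : w t ≤ 0 := by
  by_contra! hpos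
  have hfar : ∀ᶠ s in cocompact ℝ ⊓ 𝓟 (Ici T), w s ≤ w t := by
    rw [cocompact_eq_atBot_atTop, inf_sup_right, (disjoint_atBot_principal_Ici T).eq_bot,
      bot_sup_eq]
    exact (hlim.eventually (ge_mem_nhds hpos)).filter_mono inf_le_left
  obtain ⟨t₀, hTt₀, hmax⟩ := hw.continuousOn.exists_isMaxOn' isClosed_Ici ht hfar
  have hpos₀ : 0 < w t₀ := hpos.trans_le (hmax ht)
  have hTt₀ : T < t₀ := lt_of_le_of_ne hTt₀ (by rintro rfl; linarith)
  have hloc : IsLocalMax w t₀ := hmax.isLocalMax (Ici_mem_nhds hTt₀)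
  exact (hloc.deriv_deriv_nonpos hw.continuousAt).not_gt (hconvex t₀ hTt₀ hpos₀)

theorem deriv_deriv_fun_sub_const_mul {𝕜 : Type*} [NontriviallyNormedField 𝕜] {u v : 𝕜 → 𝕜}
    (hu : ContDiff 𝕜 2 u) (hv : ContDiff 𝕜 2 v) (c t : 𝕜) :
    deriv (deriv fun s => u s - c * v s) t = deriv (deriv u) t - c * deriv (deriv v) t := by
  have h2 (g : 𝕜 → 𝕜) : iteratedDeriv 2 g = deriv (deriv g) := by
    rw [iteratedDeriv_succ, iteratedDeriv_one]
  rw [← h2, ← h2, ← h2, iteratedDeriv_fun_sub hu.contDiffAt (contDiff_const.mul hv).contDiffAt,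
    iteratedDeriv_const_mul_field]

noncomputable def shiftedGaussian (α t : ℝ) : ℝ := exp (-(t + α) ^ 2 / 2)

theorem hasDerivAt_shiftedGaussian (α t : ℝ) :
    HasDerivAt (shiftedGaussian α) (-(t + α) * shiftedGaussian α t) t := by
  have h : HasDerivAt (fun s : ℝ => -(s + α) ^ 2 / 2) (-(t + α)) t :=
    ((((hasDerivAt_id' t).add_const α).fun_pow 2).fun_neg.div_const 2).congr_deriv (by ring)
  exact h.exp.congr_deriv (mul_comm _ _)

theorem deriv_deriv_shiftedGaussian (α t : ℝ) :
    deriv (deriv (shiftedGaussian α)) t = ((t + α) ^ 2 - 1) * shiftedGaussian α t := by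
  have hderiv : deriv (shiftedGaussian α) = fun s => -(s + α) * shiftedGaussian α s :=
    funext fun s => (hasDerivAt_shiftedGaussian α s).deriv
  rw [hderiv]
  refine ((((hasDerivAt_id' t).add_const α).fun_neg.mul
    (hasDerivAt_shiftedGaussian α t)).congr_deriv ?_).deriv
  ring

theorem contDiff_shiftedGaussian (α : ℝ) {n : WithTop ℕ∞} : ContDiff ℝ n (shiftedGaussian α) :=
  (((contDiff_id.add contDiff_const).pow 2).neg.div_const 2).exp

theorem tendsto_shiftedGaussian_atTop (α : ℝ) : Tendsto (shiftedGaussian α) atTop (𝓝 0) :=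
  tendsto_exp_atBot.comp <| Tendsto.atBot_div_const two_pos <| tendsto_neg_atBot_iff.mpr <|
    (tendsto_pow_atTop two_ne_zero).comp (tendsto_atTop_add_const_right _ α tendsto_id)

theorem one_le_exp_mul_shiftedGaussian {α t R : ℝ} (h : |t + α| ≤ R) :
    1 ≤ exp (R ^ 2 / 2) * shiftedGaussian α t := by
  rw [shiftedGaussian, ← exp_add]
  have hsq : (t + α) ^ 2 ≤ R ^ 2 := sq_le_sq' (abs_le.mp h).1 (abs_le.mp h).2
  exact one_le_exp (by linarith)

theorem one_div_mul_one_sub_sq_mul_le_self {b x : ℝ} (hb : 1 ≤ b) (hx₀ : 0 ≤ x) (hx₁ : x ≤ 1) :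
    1 / b * (1 - x ^ 2) * x ≤ x := by
  have hb' : 1 / b ≤ 1 := by rw [div_le_one (by linarith)]; exact hb
  have hsq : 0 ≤ 1 - x ^ 2 := by nlinarith
  calc 1 / b * (1 - x ^ 2) * x ≤ 1 * 1 * x := by gcongr; nlinarith
    _ = x := by ring

/-- **Gaussian decay of the 1D profile.**  For `b ≥ 1` and a `C²` solution of the 1D
GL equation on `[0,∞)` with `0 ≤ f ≤ 1` vanishing at infinity,
`f(t) ≤ C e^{−(t+α)²/2}`. -/
theorem oneD_profile_gaussian_decay
    (b α : ℝ) (hb : 1 ≤ b)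
    (f : ℝ → ℝ) (hf : ContDiff ℝ 2 f)
    (hrange : ∀ t : ℝ, 0 ≤ t → 0 ≤ f t ∧ f t ≤ 1)
    (hlim : Tendsto f atTop (𝓝 0))
    (hode : ∀ t : ℝ, 0 ≤ t →
      -deriv (deriv f) t + (t + α) ^ 2 * f t = 1 / b * (1 - (f t) ^ 2) * f t) :
    ∃ C > (0 : ℝ), ∀ t : ℝ, 0 ≤ t → f t ≤ C * Real.exp (-(t + α) ^ 2 / 2) := by
  set T := |α| + 1
  have hT : 1 ≤ T := le_add_of_nonneg_left (abs_nonneg α)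
  set C := exp ((T + |α|) ^ 2 / 2)
  have hle_of_le_T : ∀ t, 0 ≤ t → t ≤ T → f t ≤ C * shiftedGaussian α t := fun t ht htT =>
    (hrange t ht).2.trans <| one_le_exp_mul_shiftedGaussian <|
      (abs_add_le t α).trans (by rw [abs_of_nonneg ht]; linarith)
  refine ⟨C, exp_pos _, fun t ht => ?_⟩
  rcases le_total t T with htT | hTt
  · exact hle_of_le_T t ht htT
  set w := fun s => f s - C * shiftedGaussian α s
  have hsubsol : ∀ s, T < s → 0 < w s → 0 < deriv (deriv w) s := by
    intro s hTs hws
    have hs : 0 ≤ s := by linarith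
    have hpot : 1 < (s + α) ^ 2 := one_lt_pow₀ (by linarith [neg_abs_le α]) two_ne_zero
    have hf'' : ((s + α) ^ 2 - 1) * f s ≤ deriv (deriv f) s := by
      linarith [hode s hs, one_div_mul_one_sub_sq_mul_le_self hb (hrange s hs).1 (hrange s hs).2]
    calc 0 < ((s + α) ^ 2 - 1) * w s := mul_pos (by linarith) hws
      _ ≤ deriv (deriv f) s - C * (((s + α) ^ 2 - 1) * shiftedGaussian α s) := by
        simp only [w]; linarith
      _ = deriv (deriv w) s := by
        rw [deriv_deriv_fun_sub_const_mul hf (contDiff_shiftedGaussian α),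
          deriv_deriv_shiftedGaussian]
  have hw_cont : Continuous w :=
    hf.continuous.sub (continuous_const.mul (contDiff_shiftedGaussian α (n := 0)).continuous)
  have hw_lim : Tendsto w atTop (𝓝 0) := by
    simpa using hlim.sub ((tendsto_shiftedGaussian_atTop α).const_mul C)
  have hw_T : w T ≤ 0 := sub_nonpos.2 (hle_of_le_T T (by linarith) le_rfl)
  have hw_t : w t ≤ 0 := nonpos_of_tendsto_zero_of_deriv_deriv_pos hw_cont hw_T hw_lim hsubsol hTt
  exact sub_nonpos.1 hw_t
end
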